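/- Let 0 < λ < 1 and n ≥ 1, and let a, b : ℤ → (0,∞) be n-periodic sequences with a_j · b_{j+1} < λ² for all j ∈ ℤ. If there exists at least one forward λ-good index for a and at least one backward λ-good index for b, then there exists an integer that is simultaneously a forward λ-good index for a and a backward λ-good index for b. -/

import Mathlib

/-- `m` is a forward `λ`-good index for `a`. -/
def IsForwardGood (lam : ℝ) (a : ℤ → ℝ) (m : ℤ) : Prop :=
  ∀ k : ℕ, 1 ≤ k → ∏ i ∈ Finset.range k, a (m + i) ≤ lam ^ k

/-- `m` is a backward `λ`-good index for `b`. -/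
def IsBackwardGood (lam : ℝ) (b : ℤ → ℝ) (m : ℤ) : Prop :=
  ∀ k : ℕ, 1 ≤ k → ∏ i ∈ Finset.range k, b (m - i) ≤ lam ^ k

open Finset Real

/-!
Pass to logarithms. Take potentials `S`, `T` on `ℤ` with increments `S (j + 1) - S j = log (a j / λ)`
and `T (j + 1) - T j = log (b (j + 1) / λ)`. The forward good indices of `a` are then the `m` with
`S ≤ S m` on `[m, ∞)`, the backward good indices of `b` the `m` with `T m ≤ T` on `(-∞, m]`, and the
domination says that `S + T` is antitone. Since `a` has a forward good index, the drift of `S` over a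
period is nonpositive, so for a backward good index `m₁` of `b` the function `S` attains its maximum
over `[m₁, ∞)` at some `m ≥ m₁`. This `m` is forward good, and antitonicity of `S + T` carries the
backward goodness of `m₁` over to `m`.
-/

theorem exists_forall_add_one_sub_eq {G : Type*} [AddCommGroup G] (f : ℤ → G) :
    ∃ S : ℤ → G, ∀ j, S (j + 1) - S j = f j := by
  refine ⟨fun j => ∑ i ∈ Ico 0 j, f i - ∑ i ∈ Ico j 0, f i, fun j => ?_⟩
  dsimp only
  rcases le_or_gt 0 j with hj | hj
  · rw [← Finset.insert_Ico_right_eq_Ico_add_one hj, sum_insert right_notMem_Ico,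
      Ico_eq_empty_of_le hj, Ico_eq_empty_of_le (by omega : 0 ≤ j + 1)]
    abel
  · rw [← Finset.insert_Ico_add_one_left_eq_Ico hj, sum_insert (by simp),
      Ico_eq_empty_of_le hj.le, Ico_eq_empty_of_le (by omega : j + 1 ≤ 0)]
    abel

theorem sub_add_period_eq_of_periodic {G : Type*} [AddCommGroup G] {S c : ℤ → G}
    (hS : ∀ j, S (j + 1) - S j = c j) {p : ℤ} (hc : Function.Periodic c p) (u v : ℤ) :
    S (u + p) - S u = S (v + p) - S v := by
  have h : Function.Periodic (fun u => S (u + p) - S u) 1 := fun u => by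
    dsimp only
    rw [add_right_comm, sub_eq_sub_iff_sub_eq_sub, hS, hS, hc]
  simpa using h.int_mul (u - v) v

theorem exists_isMaxOn_Ici_of_forall_add_le {β : Type*} [LinearOrder β] {S : ℤ → β} {p : ℤ}
    (hp : 0 < p) (hS : ∀ u, S (u + p) ≤ S u) (m₁ : ℤ) :
    ∃ m, m₁ ≤ m ∧ IsMaxOn S (Set.Ici m₁) m := by
  obtain ⟨m, hm, hmax⟩ := (Ico m₁ (m₁ + p)).exists_max_image S (nonempty_Ico.mpr (by omega))
  have hshift (q : ℕ) (v : ℤ) : S (v + q * p) ≤ S v := by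
    induction q with
    | zero => simp
    | succ q ih => simpa [add_one_mul, ← add_assoc] using (hS _).trans ih
  refine ⟨m, (mem_Ico.mp hm).1, fun u (hu : m₁ ≤ u) => ?_⟩
  obtain ⟨q, hq⟩ := Int.eq_ofNat_of_zero_le (Int.ediv_nonneg (sub_nonneg.mpr hu) hp.le)
  have hu' : u = m₁ + (u - m₁) % p + q * p := by
    rw [← hq]; linarith [Int.mul_ediv_add_emod (u - m₁) p]
  calc S u = S (m₁ + (u - m₁) % p + q * p) := by rw [← hu']
    _ ≤ S (m₁ + (u - m₁) % p) := hshift q _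
    _ ≤ S m := hmax _ (mem_Ico.mpr ⟨by linarith [Int.emod_nonneg (u - m₁) hp.ne'],
        by linarith [Int.emod_lt_of_pos (u - m₁) hp]⟩)

theorem isMaxOn_Ici_and_isMinOn_Iic_of_antitone_add {α β : Type*} [LinearOrder α]
    [AddCommGroup β] [LinearOrder β] [IsOrderedAddMonoid β] {S T : α → β}
    (hST : Antitone (S + T)) {m₁ m : α} (hm : m₁ ≤ m) (hS : IsMaxOn S (Set.Ici m₁) m)
    (hT : IsMinOn T (Set.Iic m₁) m₁) : IsMaxOn S (Set.Ici m) m ∧ IsMinOn T (Set.Iic m) m := by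
  have hTm (t : α) (ht : m₁ ≤ t) (htm : t ≤ m) : T m ≤ T t :=
    le_of_add_le_add_left ((hST htm).trans (add_le_add_left (hS ht) _))
  refine ⟨fun u (hu : m ≤ u) => hS (hm.trans hu), fun t (ht : t ≤ m) => ?_⟩
  rcases le_total m₁ t with h | h
  · exact hTm t h ht
  · exact (hTm m₁ le_rfl hm).trans (hT h)

theorem prod_le_pow_card_iff_sum_log_div_nonpos {ι : Type*} {s : Finset ι} {x : ι → ℝ}
    {lam : ℝ} (hlam : 0 < lam) (hx : ∀ i ∈ s, 0 < x i) :
    ∏ i ∈ s, x i ≤ lam ^ #s ↔ ∑ i ∈ s, log (x i / lam) ≤ 0 := by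
  rw [← log_prod fun i hi => (div_pos (hx i hi) hlam).ne',
    log_nonpos_iff (prod_pos fun i hi => div_pos (hx i hi) hlam).le, prod_div_distrib,
    prod_const, div_le_one (pow_pos hlam _)]

theorem isForwardGood_iff_isMaxOn {lam : ℝ} (hlam : 0 < lam) {a S : ℤ → ℝ}
    (ha : ∀ j, 0 < a j) (hS : ∀ j, S (j + 1) - S j = log (a j / lam)) (m : ℤ) :
    IsForwardGood lam a m ↔ IsMaxOn S (Set.Ici m) m := by
  have key (k : ℕ) : ∏ i ∈ range k, a (m + i) ≤ lam ^ k ↔ S (m + k) ≤ S m := by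
    have hsum : ∑ i ∈ range k, log (a (m + i) / lam) = S (m + k) - S m := by
      simpa [← hS, add_assoc] using sum_range_sub (fun i : ℕ => S (m + i)) k
    simpa [hsum] using prod_le_pow_card_iff_sum_log_div_nonpos hlam (s := range k)
      fun i _ => ha (m + i)
  simp only [IsForwardGood, key]
  refine ⟨fun h u (hu : m ≤ u) => ?_, fun h k _ => h (by simp)⟩
  obtain ⟨k, rfl⟩ : ∃ k : ℕ, u = m + k := ⟨(u - m).toNat, by omega⟩
  rcases Nat.eq_zero_or_pos k with rfl | hk
  · simp
  · exact h k hk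

theorem isBackwardGood_iff_isMinOn {lam : ℝ} (hlam : 0 < lam) {b T : ℤ → ℝ}
    (hb : ∀ j, 0 < b j) (hT : ∀ j, T (j + 1) - T j = log (b (j + 1) / lam)) (m : ℤ) :
    IsBackwardGood lam b m ↔ IsMinOn T (Set.Iic m) m := by
  have key (k : ℕ) : ∏ i ∈ range k, b (m - i) ≤ lam ^ k ↔ T m ≤ T (m - k) := by
    have hsum : ∑ i ∈ range k, log (b (m - i) / lam) = T m - T (m - k) := by
      calc ∑ i ∈ range k, log (b (m - i) / lam)
          = ∑ i ∈ range k, (T (m - i) - T (m - (i + 1 : ℕ))) :=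
            sum_congr rfl fun i _ => by
              have h := hT (m - i - 1)
              rw [sub_add_cancel] at h
              rw [Nat.cast_succ, ← sub_sub, h]
        _ = T m - T (m - k) := by simpa using sum_range_sub' (fun i : ℕ => T (m - i)) k
    simpa [hsum] using prod_le_pow_card_iff_sum_log_div_nonpos hlam (s := range k)
      fun i _ => hb (m - i)
  simp only [IsBackwardGood, key]
  refine ⟨fun h t (ht : t ≤ m) => ?_, fun h k _ => h (by simp)⟩
  obtain ⟨k, rfl⟩ : ∃ k : ℕ, t = m - k := ⟨(m - t).toNat, by omega⟩
  rcases Nat.eq_zero_or_pos k with rfl | hk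
  · simp
  · exact h k hk

theorem forward_and_backward_good_indices_meet_general (lam : ℝ) (hlam0 : 0 < lam)
    (n : ℕ) (hn : 1 ≤ n) (a b : ℤ → ℝ)
    (ha : ∀ j : ℤ, 0 < a j) (hb : ∀ j : ℤ, 0 < b j)
    (hap : ∀ j : ℤ, a (j + n) = a j)
    (hdom : ∀ j : ℤ, a j * b (j + 1) < lam ^ 2)
    (hfa : ∃ m : ℤ, IsForwardGood lam a m)
    (hbb : ∃ m : ℤ, IsBackwardGood lam b m) :
    ∃ m : ℤ, IsForwardGood lam a m ∧ IsBackwardGood lam b m := by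
  obtain ⟨S, hS⟩ := exists_forall_add_one_sub_eq fun j => log (a j / lam)
  obtain ⟨T, hT⟩ := exists_forall_add_one_sub_eq fun j => log (b (j + 1) / lam)
  obtain ⟨m₀, hm₀⟩ := hfa
  obtain ⟨m₁, hm₁⟩ := hbb
  simp only [isForwardGood_iff_isMaxOn hlam0 ha hS, isBackwardGood_iff_isMinOn hlam0 hb hT]
    at hm₀ hm₁ ⊢
  have hshift (u : ℤ) : S (u + n) ≤ S u := by
    rw [← sub_nonpos, sub_add_period_eq_of_periodic hS
      (Function.Periodic.comp hap fun x => log (x / lam)) u m₀, sub_nonpos]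
    exact hm₀ (by simp)
  obtain ⟨m, hm₁m, hmax⟩ := exists_isMaxOn_Ici_of_forall_add_le (by omega) hshift m₁
  have hanti : Antitone (S + T) := antitone_int_of_succ_le fun j => by
    have hlog : log (a j / lam) + log (b (j + 1) / lam) < 0 := by
      rw [← log_mul (div_pos (ha j) hlam0).ne' (div_pos (hb _) hlam0).ne']
      refine log_neg (mul_pos (div_pos (ha j) hlam0) (div_pos (hb _) hlam0)) ?_
      rw [div_mul_div_comm, ← sq, div_lt_one (by positivity)]
      exact hdom j
    simp only [Pi.add_apply]
    linarith [hS j, hT j]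
  exact ⟨m, isMaxOn_Ici_and_isMinOn_Iic_of_antitone_add hanti hm₁m hmax hm₁⟩

/-- The intersection argument in the proof of Lemma 4.2: for `n`-periodic positive
sequences `a`, `b` dominated by `a j * b (j+1) < λ²`, if there is a forward `λ`-good
index for `a` and a backward `λ`-good index for `b`, then some index is both. -/
theorem forward_and_backward_good_indices_meet (lam : ℝ) (hlam0 : 0 < lam)
    (hlam1 : lam < 1) (n : ℕ) (hn : 1 ≤ n) (a b : ℤ → ℝ)
    (ha : ∀ j : ℤ, 0 < a j) (hb : ∀ j : ℤ, 0 < b j)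
    (hap : ∀ j : ℤ, a (j + n) = a j) (hbp : ∀ j : ℤ, b (j + n) = b j)
    (hdom : ∀ j : ℤ, a j * b (j + 1) < lam ^ 2)
    (hfa : ∃ m : ℤ, IsForwardGood lam a m)
    (hbb : ∃ m : ℤ, IsBackwardGood lam b m) :
    ∃ m : ℤ, IsForwardGood lam a m ∧ IsBackwardGood lam b m :=
  forward_and_backward_good_indices_meet_general lam hlam0 n hn a b ha hb hap hdom hfa hbb
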